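/- Semantic soundness of the rule of Constancy: in the Outcome Logic instance with variable assignment, for every program C and every P ⊆ S with free(P) ∩ mod(C) = ∅, the triple ⟨◻P⟩C⟨◻P⟩ is semantically valid: for every m ∈ W(S) with supp(m) ⊆ P, one has supp(⟦C⟧†(m)) ⊆ P. -/

import Mathlib

open scoped Classical

universe u v

/-- A semiring that is simultaneously a complete lattice with bottom `0`, whose order
coincides with the natural (additive) order, and in which addition and multiplication
are Scott-continuous. -/
class OLSemiring (U : Type u) extends Semiring U, CompleteLattice U where
  bot_eq_zero : (⊥ : U) = 0
  le_iff_exists_add : ∀ a b : U, a ≤ b ↔ ∃ c, a + c = b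
  add_scott : ∀ (D : Set U), D.Nonempty → DirectedOn (· ≤ ·) D → ∀ y : U,
    sSup ((fun x => x + y) '' D) = sSup D + y
  mul_scott_right : ∀ (D : Set U), D.Nonempty → DirectedOn (· ≤ ·) D → ∀ y : U,
    sSup ((fun x => x * y) '' D) = sSup D * y
  mul_scott_left : ∀ (D : Set U), D.Nonempty → DirectedOn (· ≤ ·) D → ∀ y : U,
    sSup ((fun x => y * x) '' D) = y * sSup D

variable {U : Type u} [OLSemiring U]

/-- Infinite sum: supremum over finite subfamilies of finite sums. -/
noncomputable def wsum {I : Type v} (f : I → U) : U :=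
  ⨆ J : Finset I, ∑ i ∈ J, f i

/-- The unit of the weighting monad. -/
noncomputable def eta {X : Type u} (x : X) : X → U :=
  fun y => if y = x then 1 else 0

/-- Kleisli extension: `kext f m y = ∑_{x ∈ supp m} m x * f x y`. -/
noncomputable def kext {X Y : Type u} (f : X → Y → U) (m : X → U) : Y → U :=
  fun y => wsum (fun x : Function.support m => m x.1 * f x.1 y)

/-- Syntax of tests over primitive tests indexed by `TI`. -/
inductive TestExpr (TI : Type u) : Type u where
  | prim (t : TI)
  | tt
  | ff
  | and (b₁ b₂ : TestExpr TI)
  | or (b₁ b₂ : TestExpr TI)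
  | not (b : TestExpr TI)

/-- The set of states at which a test is true. -/
def testSet {St TI : Type u} (tsem : TI → Set St) : TestExpr TI → Set St
  | .prim t => tsem t
  | .tt => Set.univ
  | .ff => ∅
  | .and b₁ b₂ => testSet tsem b₁ ∩ testSet tsem b₂
  | .or b₁ b₂ => testSet tsem b₁ ∪ testSet tsem b₂
  | .not b => (testSet tsem b)ᶜ

/-- Expressions: a test or a weight. -/
inductive Expr (U : Type u) (TI : Type u) : Type u where
  | test (b : TestExpr TI)
  | wt (u : U)

/-- Evaluation of expressions into weights. -/
noncomputable def eeval {St TI : Type u} (tsem : TI → Set St) : Expr U TI → St → U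
  | .test b => fun σ => if σ ∈ testSet tsem b then 1 else 0
  | .wt u => fun _ => u

/-- Programs. -/
inductive Prog (U St TI Act : Type u) : Type u where
  | skip
  | seq (C₁ C₂ : Prog U St TI Act)
  | choice (C₁ C₂ : Prog U St TI Act)
  | assume (e : Expr U TI)
  | iter (C : Prog U St TI Act) (e e' : Expr U TI)
  | act (a : Act)

/-- The characteristic function of iteration. -/
noncomputable def Phi {St : Type u} (w w' : St → U) (g : St → St → U)
    (f : St → St → U) : St → St → U :=
  fun σ τ => w σ * kext f (g σ) τ + w' σ * eta σ τ

/-- Denotational semantics of programs. -/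
noncomputable def sem {St TI Act : Type u} (tsem : TI → Set St)
    (asem : Act → St → St → U) : Prog U St TI Act → St → St → U
  | .skip => fun σ => eta σ
  | .seq C₁ C₂ => fun σ => kext (sem tsem asem C₂) (sem tsem asem C₁ σ)
  | .choice C₁ C₂ => fun σ τ => sem tsem asem C₁ σ τ + sem tsem asem C₂ σ τ
  | .assume e => fun σ τ => eeval tsem e σ * eta σ τ
  | .iter C e e' =>
      ⨆ n : ℕ, (Phi (eeval tsem e) (eeval tsem e') (sem tsem asem C))^[n] (fun _ _ => 0)
  | .act a => asem a

/-- Outcome assertions. -/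
abbrev OA (U : Type u) (St : Type u) := Set (St → U)

/-- Binary outcome conjunction. -/
def oplus {St : Type u} (φ ψ : OA U St) : OA U St :=
  { m | ∃ m₁ ∈ φ, ∃ m₂ ∈ ψ, m = fun σ => m₁ σ + m₂ σ }

/-- Indexed outcome conjunction. -/
noncomputable def bigOplus {St T : Type u} (φ : T → OA U St) : OA U St :=
  { m | ∃ f : T → St → U, (∀ t, f t ∈ φ t) ∧ m = fun σ => wsum (fun t => f t σ) }

/-- Right scaling of an assertion by a weight. -/
def odotR {St : Type u} (φ : OA U St) (u : U) : OA U St :=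
  { m' | ∃ m ∈ φ, m' = fun σ => m σ * u }

/-- Left scaling of an assertion by a weight. -/
def odotL {St : Type u} (u : U) (φ : OA U St) : OA U St :=
  { m' | ∃ m ∈ φ, m' = fun σ => u * m σ }

/-- `φ ⊨ e = u` : the expression `e` evaluates to `u` on the support of every `m ∈ φ`. -/
def entailsEq {St TI : Type u} (tsem : TI → Set St) (φ : OA U St)
    (e : Expr U TI) (u : U) : Prop :=
  ∀ m ∈ φ, ∀ σ, m σ ≠ 0 → eeval tsem e σ = u

/-- Semantic validity of an outcome triple. -/
def valid {St TI Act : Type u} (tsem : TI → Set St) (asem : Act → St → St → U)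
    (φ : OA U St) (C : Prog U St TI Act) (ψ : OA U St) : Prop :=
  ∀ m ∈ φ, kext (sem tsem asem C) m ∈ ψ

/-- The family `ψ` of assertions converges to `ψlim`. -/
def convergesTo {St : Type u} (ψ : ℕ → OA U St) (ψlim : OA U St) : Prop :=
  ∀ ms : ℕ → St → U, (∀ n, ms n ∈ ψ n) → (fun σ => wsum (fun n => ms n σ)) ∈ ψlim

/-- The Outcome Logic proof system (with oracle axioms for valid atomic triples). -/
inductive Deriv {St TI Act : Type u} (tsem : TI → Set St) (asem : Act → St → St → U) :
    OA U St → Prog U St TI Act → OA U St → Prop where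
  | atom {φ ψ} (a : Act) :
      valid tsem asem φ (.act a) ψ → Deriv tsem asem φ (.act a) ψ
  | skip (φ) : Deriv tsem asem φ .skip φ
  | seq {φ ϑ ψ C₁ C₂} :
      Deriv tsem asem φ C₁ ϑ → Deriv tsem asem ϑ C₂ ψ →
      Deriv tsem asem φ (.seq C₁ C₂) ψ
  | plus {φ ψ₁ ψ₂ C₁ C₂} :
      Deriv tsem asem φ C₁ ψ₁ → Deriv tsem asem φ C₂ ψ₂ →
      Deriv tsem asem φ (.choice C₁ C₂) (oplus ψ₁ ψ₂)
  | assume {φ e u} :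
      entailsEq tsem φ e u → Deriv tsem asem φ (.assume e) (odotR φ u)
  | iter {C e e'} (φn ψn : ℕ → OA U St) (ψlim : OA U St) :
      convergesTo ψn ψlim →
      (∀ n, Deriv tsem asem (φn n) (.seq (.assume e) C) (φn (n + 1))) →
      (∀ n, Deriv tsem asem (φn n) (.assume e') (ψn n)) →
      Deriv tsem asem (φn 0) (.iter C e e') ψlim
  | false (C φ) : Deriv tsem asem ∅ C φ
  | true (C φ) : Deriv tsem asem φ C Set.univ
  | scale {φ ψ C} (u : U) :
      Deriv tsem asem φ C ψ → Deriv tsem asem (odotL u φ) C (odotL u ψ)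
  | disj {φ₁ φ₂ ψ₁ ψ₂ C} :
      Deriv tsem asem φ₁ C ψ₁ → Deriv tsem asem φ₂ C ψ₂ →
      Deriv tsem asem (φ₁ ∪ φ₂) C (ψ₁ ∪ ψ₂)
  | conj {φ₁ φ₂ ψ₁ ψ₂ C} :
      Deriv tsem asem φ₁ C ψ₁ → Deriv tsem asem φ₂ C ψ₂ →
      Deriv tsem asem (φ₁ ∩ φ₂) C (ψ₁ ∩ ψ₂)
  | choice {T : Type u} {C} (φ φ' : T → OA U St) :
      (∀ t, Deriv tsem asem (φ t) C (φ' t)) →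
      Deriv tsem asem (bigOplus φ) C (bigOplus φ')
  | exists_ {T : Type u} {C} (φ φ' : T → OA U St) :
      (∀ t, Deriv tsem asem (φ t) C (φ' t)) →
      Deriv tsem asem (⋃ t, φ t) C (⋃ t, φ' t)
  | conseq {φ φ' ψ ψ' C} :
      φ' ⊆ φ → Deriv tsem asem φ C ψ → ψ ⊆ ψ' →
      Deriv tsem asem φ' C ψ'

/-! ## The instance with variables and state -/

/-- Program stores: maps from variables to integers. -/
abbrev Store (Var : Type) := Var → ℤ

/-- Arithmetic expressions over variables `Var` (tests evaluate to 0 or 1). -/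
inductive AExpr (Var : Type) : Type where
  | var (x : Var)
  | const (v : ℤ)
  | test (b : TestExpr (Set (Store Var)))
  | add (E₁ E₂ : AExpr Var)
  | sub (E₁ E₂ : AExpr Var)
  | mul (E₁ E₂ : AExpr Var)

/-- Evaluation of arithmetic expressions. -/
noncomputable def aeval {Var : Type} : AExpr Var → Store Var → ℤ
  | .var x, s => s x
  | .const v, _ => v
  | .test b, s => if s ∈ testSet id b then 1 else 0
  | .add E₁ E₂, s => aeval E₁ s + aeval E₂ s
  | .sub E₁ E₂, s => aeval E₁ s - aeval E₂ s
  | .mul E₁ E₂, s => aeval E₁ s * aeval E₂ s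

/-- Semantics of the assignment action `x := E` : `⟦x:=E⟧(s) = η(s[x↦⟦E⟧(s)])`. -/
noncomputable def asemAssign (U : Type) [OLSemiring U] {Var : Type} :
    Var × AExpr Var → Store Var → Store Var → U :=
  fun a s => eta (Function.update s a.1 (aeval a.2 s))

/-- Programs of the instance with state: primitive tests are all subsets of stores and
atomic actions are assignments. -/
abbrev ProgS (U Var : Type) := Prog U (Store Var) (Set (Store Var)) (Var × AExpr Var)

/-- Substitution on outcome assertions:
`φ[E/x] = {m | (λs. η(s[x↦⟦E⟧(s)]))†(m) ∈ φ}`. -/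
def substOA {U : Type} [OLSemiring U] {Var : Type} (x : Var) (E : AExpr Var)
    (φ : OA U (Store Var)) : OA U (Store Var) :=
  { m | kext (fun s => eta (Function.update s x (aeval E s))) m ∈ φ }

/-- `◻P = {m | supp(m) ⊆ P}`. -/
def boxOA {U : Type} [OLSemiring U] {Var : Type} (P : Set (Store Var)) :
    OA U (Store Var) :=
  { m | Function.support m ⊆ P }

/-- The free variables of an assertion on stores. -/
def freeVars {Var : Type} (P : Set (Store Var)) : Set Var :=
  { x | ∃ s ∈ P, ∃ v : ℤ, Function.update s x v ∉ P }

/-- The variables modified by a program. -/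
def modVars {U Var : Type} : ProgS U Var → Set Var
  | .skip => ∅
  | .seq C₁ C₂ => modVars C₁ ∪ modVars C₂
  | .choice C₁ C₂ => modVars C₁ ∪ modVars C₂
  | .assume _ => ∅
  | .iter C _ _ => modVars C
  | .act a => {a.1}

/-!
A store outside `P` can only be reached from one inside `P` by changing a variable that is
free in `P`, so every assignment `x := E` with `x ∉ free(P)` keeps stores of `P` in `P`.
Every other construct combines the outcomes of its components by sums, scalings, Kleisli
composition and suprema, none of which enlarges supports; so by induction on `C`, a state of
`P` leads under `⟦C⟧` only to states of `P`, and hence so does any weighting supported in `P`.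
-/

open Function

lemma wsum_eq_zero {I : Type v} {f : I → U} (hf : ∀ i, f i = 0) : wsum f = 0 := by
  simp [wsum, hf]

lemma eq_of_eta_ne_zero {X : Type u} {x y : X} (h : (eta x y : U) ≠ 0) : y = x :=
  not_not.mp fun hne => h (if_neg hne)

lemma support_kext_subset {X Y : Type u} {f : X → Y → U} {m : X → U} {P : Set Y}
    (hf : ∀ x ∈ support m, support (f x) ⊆ P) : support (kext f m) ⊆ P := by
  intro y hy
  by_contra hyP
  refine hy (wsum_eq_zero fun x => ?_)
  have hfx : f x.1 y = 0 := notMem_support.mp fun h => hyP (hf x.1 x.2 h)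
  rw [hfx, mul_zero]

lemma support_iSup_subset {ι : Sort*} {X : Type*} (f : ι → X → U) :
    support (⨆ i, f i) ⊆ ⋃ i, support (f i) := by
  intro x hx
  by_contra hxf
  simp only [Set.mem_iUnion, mem_support, not_exists, not_not] at hxf
  exact hx (by simp [iSup_apply, hxf, ← OLSemiring.bot_eq_zero])

def PreservesSupport {X : Type u} (P : Set X) (f : X → X → U) : Prop :=
  ∀ x ∈ P, support (f x) ⊆ P

namespace PreservesSupport

variable {X : Type u} {P : Set X} {f g : X → X → U}

lemma support_kext_subset (hf : PreservesSupport P f) {m : X → U} (hm : support m ⊆ P) :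
    support (kext f m) ⊆ P :=
  _root_.support_kext_subset fun x hx => hf x (hm hx)

lemma zero : PreservesSupport P (fun _ _ => (0 : U)) := by
  simp [PreservesSupport]

lemma eta : PreservesSupport P (eta : X → X → U) :=
  fun _ hx _ hy => eq_of_eta_ne_zero hy ▸ hx

lemma kleisli (hf : PreservesSupport P f) (hg : PreservesSupport P g) :
    PreservesSupport P (fun x => kext g (f x)) :=
  fun x hx => hg.support_kext_subset (hf x hx)

lemma add (hf : PreservesSupport P f) (hg : PreservesSupport P g) :
    PreservesSupport P (fun x y => f x y + g x y) :=
  fun x hx => (support_add _ _).trans (Set.union_subset (hf x hx) (hg x hx))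

lemma const_mul (w : X → U) (hf : PreservesSupport P f) :
    PreservesSupport P (fun x y => w x * f x y) :=
  fun x hx => (support_mul_subset_right _ _).trans (hf x hx)

lemma iSup {ι : Sort*} {F : ι → X → X → U} (hF : ∀ i, PreservesSupport P (F i)) :
    PreservesSupport P (⨆ i, F i) := by
  intro x hx
  rw [iSup_apply]
  exact (support_iSup_subset _).trans (Set.iUnion_subset fun i => hF i x hx)

lemma Phi (w w' : X → U) (hg : PreservesSupport P g) (hf : PreservesSupport P f) :
    PreservesSupport P (_root_.Phi w w' g f) :=
  (hg.kleisli hf |>.const_mul w).add (PreservesSupport.eta.const_mul w')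

end PreservesSupport

variable {Var : Type}

lemma preservesSupport_asemAssign {U : Type} [OLSemiring U] {P : Set (Store Var)} {x : Var}
    (hx : x ∉ freeVars P) (E : AExpr Var) : PreservesSupport P (asemAssign U (x, E)) := by
  intro s hs t ht
  rw [eq_of_eta_ne_zero ht]
  by_contra hupd
  exact hx ⟨s, hs, aeval E s, hupd⟩

lemma preservesSupport_sem {U : Type} [OLSemiring U] (tsem : Set (Store Var) → Set (Store Var))
    {P : Set (Store Var)} (C : ProgS U Var) (hC : Disjoint (freeVars P) (modVars C)) :
    PreservesSupport P (sem tsem (asemAssign U) C) := by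
  induction C with
  | skip => exact .eta
  | seq C₁ C₂ ih₁ ih₂ =>
    rw [modVars, Set.disjoint_union_right] at hC
    exact (ih₁ hC.1).kleisli (ih₂ hC.2)
  | choice C₁ C₂ ih₁ ih₂ =>
    rw [modVars, Set.disjoint_union_right] at hC
    exact (ih₁ hC.1).add (ih₂ hC.2)
  | assume e => exact PreservesSupport.eta.const_mul _
  | iter C e e' ih =>
    refine PreservesSupport.iSup fun n => ?_
    exact Iterate.rec _ PreservesSupport.zero (fun _ hf => (ih hC).Phi _ _ hf) n
  | act a =>
    rw [modVars, Set.disjoint_singleton_right] at hC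
    exact preservesSupport_asemAssign hC a.2

theorem constancy_semantically_sound_general (U : Type) [OLSemiring U]
    (Var : Type)
    (C : ProgS U Var) (P : Set (Store Var))
    (hfm : freeVars P ∩ modVars C = ∅)
    (m : Store Var → U) (hm : Function.support m ⊆ P) :
    Function.support (kext (sem id (asemAssign U) C) m) ⊆ P :=
  (preservesSupport_sem id C (Set.disjoint_iff_inter_eq_empty.mpr hfm)).support_kext_subset hm

/-- **Semantic soundness of the rule of Constancy**: in the instance with variable
assignment, if `free(P) ∩ mod(C) = ∅` then `⊨ ⟨◻P⟩C⟨◻P⟩`: for every `m ∈ W(S)` with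
`supp(m) ⊆ P`, also `supp(⟦C⟧†(m)) ⊆ P`. -/
theorem constancy_semantically_sound (U : Type) [OLSemiring U]
    (Var : Type) [Countable Var]
    (C : ProgS U Var) (P : Set (Store Var))
    (hfm : freeVars P ∩ modVars C = ∅)
    (m : Store Var → U) (hm : Function.support m ⊆ P) :
    Function.support (kext (sem id (asemAssign U) C) m) ⊆ P :=
  constancy_semantically_sound_general U Var C P hfm m hm
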